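/- arXiv:0907.5224 — 3 statements merged into one kernel-verified Lean document; each statement's English description precedes it below -/
import Mathlib

section
/- For |x| < 1/e, let t = t(x) = 1 + Σ_{k≥1} (k^k/k!) x^k with Re(t) > 1. Then w(t) := -1/t - log(1 - 1/t) satisfies e^{-(w+1)} = x; equivalently, w(t) = Σ_{m=2}^∞ (1/m) t^{-m} and e^{-(w(t)+1)} = (1 - 1/t) e^{-(1 - 1/t)}. -/
/-!
Let `T(z) = ∑ n^(n-1) zⁿ / n!` be the tree function. The series defining `t` is `z T'(z)`.
Abel's identity at `z = n` gives, for `n ≥ 1`, the convolution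
`∑_{i+j=n} i^(i-1)/i! · j^j/j! = n^n/n!`, which says `T (1 + z T') = z T'`, i.e.
`1 - 1/t = T(x)`. Then `F = T e^(-T)` solves the Euler equation `z F' = F` with `F'(0) = 1`,
so `F(z) = z`. The remaining two claims are `exp ∘ log = id` and the Taylor series of
`log (1 - 1/t)`.
-/

open Finset Metric
open scoped Nat Topology

theorem sum_range_neg_one_pow_mul_choose_mul_pow {R : Type*} [CommRing R] {j n : ℕ} (h : j < n) :
    ∑ k ∈ range (n + 1), (-1 : R) ^ (n - k) * n.choose k * (k : R) ^ j = 0 := by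
  have := congr_fun (fwdDiff_iter_pow_eq_zero_of_lt (R := R) h) 0
  rw [fwdDiff_iter_eq_sum_shift] at this
  simpa [zsmul_eq_mul] using this

theorem eq_smul_deriv_zero_of_smul_deriv_eq {E : Type*} [NormedAddCommGroup E] [NormedSpace ℂ E]
    [CompleteSpace E] {f : ℂ → E} {s : Set ℂ} (hs : IsOpen s) (hs' : IsPreconnected s)
    (h0 : (0 : ℂ) ∈ s) (hf : DifferentiableOn ℂ f s) (hode : ∀ z ∈ s, z • deriv f z = f z) :
    ∀ z ∈ s, f z = z • deriv f 0 := by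
  have hf0 : f 0 = 0 := by simpa using (hode 0 h0).symm
  -- `g = f z / z` away from `0`, so `g' = (z f' - f) / z² = 0` there, hence everywhere.
  set g := dslope f 0
  have hg : DifferentiableOn ℂ g s := (Complex.differentiableOn_dslope (hs.mem_nhds h0)).mpr hf
  have hg' : ∀ z ∈ s, z ≠ 0 → deriv g z = 0 := by
    intro z hz hz0
    have hfz : HasDerivAt f (deriv f z) z := (hf.differentiableAt (hs.mem_nhds hz)).hasDerivAt
    have hloc : (fun y => y⁻¹ • f y) =ᶠ[𝓝 z] g := by
      filter_upwards [isOpen_ne.mem_nhds hz0] with y hy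
      simp [g, dslope_of_ne f hy, slope_def_module, hf0]
    rw [← hloc.deriv_eq, ((hasDerivAt_inv hz0).fun_smul hfz).deriv, ← hode z hz, smul_smul,
      ← add_smul]
    field_simp
    simp
  have hg'0 : deriv g 0 = 0 := by
    have hcont : ContinuousAt (deriv g) 0 :=
      ((hg.deriv hs).differentiableAt (hs.mem_nhds h0)).continuousAt
    refine tendsto_nhds_unique (hcont.tendsto.mono_left (nhdsWithin_le_nhds (s := {0}ᶜ))) ?_
    refine tendsto_const_nhds.congr' ?_
    filter_upwards [nhdsWithin_le_nhds (hs.mem_nhds h0), self_mem_nhdsWithin] with z hz hz0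
    exact (hg' z hz hz0).symm
  intro z hz
  have hconst : g z = g 0 := hs.is_const_of_deriv_eq_zero hs' hg
    (fun y hy => by rcases eq_or_ne y 0 with rfl | hy0 <;> simp [*]) hz h0
  calc f z = z • g z := by rw [← sub_zero (f z), ← hf0, ← sub_smul_dslope, sub_zero]
    _ = z • deriv f 0 := by rw [hconst]; exact congrArg (z • ·) (dslope_same f 0)

section PowerSeries

variable {a : ℕ → ℂ} {C : ℝ}

theorem summable_norm_mul_pow_of_norm_le (ha : ∀ n, ‖a n‖ ≤ C ^ n) {z : ℂ} (hz : C * ‖z‖ < 1) :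
    Summable fun n => ‖a n * z ^ n‖ := by
  have hC : 0 ≤ C := (norm_nonneg _).trans (by simpa using ha 1)
  refine Summable.of_nonneg_of_le (fun _ => norm_nonneg _) (fun n => ?_)
    (summable_geometric_of_lt_one (by positivity) hz)
  rw [norm_mul, norm_pow, mul_pow]
  exact mul_le_mul_of_nonneg_right (ha n) (by positivity)

theorem hasDerivAt_tsum_mul_pow (ha : ∀ n, ‖a n‖ ≤ C ^ n) {z : ℂ} (hz : C * ‖z‖ < 1) :
    HasDerivAt (fun w => ∑' n, a n * w ^ n) (∑' n, n * a n * z ^ (n - 1)) z := by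
  have hC : 0 ≤ C := (norm_nonneg _).trans (by simpa using ha 1)
  have hev : ∀ᶠ R in 𝓝[>] ‖z‖, C * R < 1 :=
    nhdsWithin_le_nhds ((continuous_const_mul C).continuousAt.eventually (gt_mem_nhds hz))
  obtain ⟨R, hCR, hzR⟩ := (hev.and self_mem_nhdsWithin).exists
  have hR : 0 < R := (norm_nonneg z).trans_lt hzR
  have hu : Summable fun n : ℕ => n * (C * R) ^ n / R := by
    simpa using (summable_pow_mul_geometric_of_norm_lt_one 1
      (by rwa [Real.norm_of_nonneg (by positivity)] : ‖C * R‖ < 1)).div_const R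
  refine hasDerivAt_tsum_of_isPreconnected (g := fun n w => a n * w ^ n)
    (g' := fun n w => n * a n * w ^ (n - 1)) hu isOpen_ball (convex_ball 0 R).isPreconnected
    (fun n y _ => ?_) (fun n y hy => ?_) (mem_ball_self hR) ?_ (mem_ball_zero_iff.mpr hzR)
  · exact ((hasDerivAt_pow n y).const_mul (a n)).congr_deriv (by ring)
  · rcases n with _ | n
    · simp
    have hy : ‖y‖ ≤ R := (mem_ball_zero_iff.mp hy).le
    calc ‖((n + 1 : ℕ) : ℂ) * a (n + 1) * y ^ (n + 1 - 1)‖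
        = (n + 1) * ‖a (n + 1)‖ * ‖y‖ ^ n := by
          rw [norm_mul, norm_mul, norm_pow, Complex.norm_natCast]; simp
      _ ≤ (n + 1) * C ^ (n + 1) * R ^ n := by gcongr; exact ha _
      _ = ((n + 1 : ℕ) : ℝ) * (C * R) ^ (n + 1) / R := by field_simp; push_cast; ring
  · exact summable_of_ne_finset_zero (s := {0}) (by simp +contextual)

end PowerSeries

theorem hasSum_pow_add_two_div {z : ℂ} (hz : ‖z‖ < 1) :
    HasSum (fun m : ℕ => z ^ (m + 2) / (m + 2 : ℕ)) (-Complex.log (1 - z) - z) := by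
  have h := (hasSum_nat_add_iff' 2).mpr (Complex.hasSum_taylorSeries_neg_log hz)
  rw [sum_range_succ, sum_range_one] at h
  simpa using h

noncomputable def treeCoeff (n : ℕ) : ℂ := if n = 0 then 0 else (n : ℂ) ^ (n - 1) / n !

@[simp]
theorem treeCoeff_zero : treeCoeff 0 = 0 := if_pos rfl

/-- `n!` times `abelPoly n z` is the left side of Abel's identity
`∑ₖ C(n,k) k^(k-1) (z-k)^(n-k) = n z^(n-1)`, which is `abelPoly_succ`. -/
noncomputable def abelPoly (n : ℕ) (z : ℂ) : ℂ :=
  ∑ p ∈ antidiagonal n, treeCoeff p.1 * (z - p.1) ^ p.2 / p.2 !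

theorem hasDerivAt_sub_pow_succ_div_factorial (a z : ℂ) (n : ℕ) :
    HasDerivAt (fun z : ℂ => (z - a) ^ (n + 1) / (n + 1)!) ((z - a) ^ n / n !) z := by
  have h := ((hasDerivAt_pow (n + 1) (z - a)).comp z ((hasDerivAt_id z).sub_const a)).div_const
    ((n + 1)! : ℂ)
  refine h.congr_deriv ?_
  rw [Nat.factorial_succ]
  push_cast
  field_simp

theorem hasDerivAt_abelPoly_succ (n : ℕ) (z : ℂ) :
    HasDerivAt (abelPoly (n + 1)) (abelPoly n z) z := by
  have h : abelPoly (n + 1) = fun z => treeCoeff (n + 1) +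
      ∑ p ∈ antidiagonal n, treeCoeff p.1 * ((z - p.1) ^ (p.2 + 1) / (p.2 + 1)!) := by
    ext z
    simp [abelPoly, Nat.sum_antidiagonal_succ', mul_div_assoc]
  rw [h]
  have hsum := HasDerivAt.fun_sum (u := antidiagonal n) (x := z) fun p _ =>
    (hasDerivAt_sub_pow_succ_div_factorial (p.1 : ℂ) z p.2).const_mul (treeCoeff p.1)
  simpa [abelPoly, mul_div_assoc] using hsum.const_add (treeCoeff (n + 1))

theorem abelPoly_add_two_zero (n : ℕ) : abelPoly (n + 2) 0 = 0 := by
  -- up to the factor `(n+2)!`, this is an `(n+2)`-th finite difference of `k ↦ k^(n+1)`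
  have hterm : ∀ k ∈ range (n + 3), treeCoeff k * (0 - k) ^ (n + 2 - k) / (n + 2 - k)!
      = (-1) ^ (n + 2 - k) * (n + 2).choose k * (k : ℂ) ^ (n + 1) / (n + 2)! := by
    intro k hk
    have hk : k ≤ n + 2 := Nat.lt_succ_iff.mp (mem_range.mp hk)
    rcases Nat.eq_zero_or_pos k with rfl | hk0
    · simp [treeCoeff]
    rw [treeCoeff, if_neg hk0.ne', Nat.cast_choose ℂ hk, zero_sub, neg_pow]
    have hpow : (k : ℂ) ^ (k - 1) * (k : ℂ) ^ (n + 2 - k) = (k : ℂ) ^ (n + 1) := by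
      rw [← pow_add]; congr 1; omega
    have hfac : ((n + 2)! : ℂ) ≠ 0 := Nat.cast_ne_zero.mpr (Nat.factorial_ne_zero _)
    rw [← hpow]
    field_simp
  rw [abelPoly, Nat.sum_antidiagonal_eq_sum_range_succ_mk]
  rw [sum_congr rfl hterm, ← sum_div, sum_range_neg_one_pow_mul_choose_mul_pow (by omega), zero_div]

theorem abelPoly_succ (n : ℕ) (z : ℂ) : abelPoly (n + 1) z = z ^ n / n ! := by
  induction n generalizing z with
  | zero => simp [abelPoly, treeCoeff, Nat.sum_antidiagonal_succ]
  | succ n ih =>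
    have hderiv : ∀ z, HasDerivAt (fun z => abelPoly (n + 2) z - z ^ (n + 1) / (n + 1)!) 0 z := by
      intro z
      simpa [ih] using (hasDerivAt_abelPoly_succ (n + 1) z).fun_sub
        (hasDerivAt_sub_pow_succ_div_factorial 0 z n)
    have := is_const_of_deriv_eq_zero (fun z => (hderiv z).differentiableAt)
      (fun z => (hderiv z).deriv) z 0
    simpa [abelPoly_add_two_zero, sub_eq_zero] using this

theorem sum_antidiagonal_treeCoeff_mul (n : ℕ) :
    ∑ p ∈ antidiagonal (n + 1), treeCoeff p.1 * ((p.2 : ℂ) ^ p.2 / p.2 !) =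
      ((n + 1 : ℕ) : ℂ) ^ (n + 1) / (n + 1)! := by
  have h := abelPoly_succ n (n + 1 : ℕ)
  rw [abelPoly] at h
  rw [Nat.factorial_succ, ← sum_congr rfl fun p hp => ?_, h]
  · push_cast
    field_simp
    ring
  · rw [HasAntidiagonal.mem_antidiagonal] at hp
    rw [mul_div_assoc, ← hp]
    push_cast
    ring_nf

theorem natCast_mul_treeCoeff {n : ℕ} (hn : n ≠ 0) :
    (n : ℂ) * treeCoeff n = (n : ℂ) ^ n / n ! := by
  rw [treeCoeff, if_neg hn, ← mul_div_assoc, ← pow_succ']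
  congr 2
  omega

theorem norm_natCast_pow_self_div_factorial_le (n : ℕ) :
    ‖(n : ℂ) ^ n / (n ! : ℂ)‖ ≤ Real.exp 1 ^ n := by
  rw [norm_div, norm_pow, Complex.norm_natCast, Complex.norm_natCast, Real.exp_one_pow]
  exact Real.pow_div_factorial_le_exp _ (Nat.cast_nonneg n) n

theorem norm_natCast_mul_treeCoeff_le (n : ℕ) : ‖(n : ℂ) * treeCoeff n‖ ≤ Real.exp 1 ^ n := by
  rcases eq_or_ne n 0 with rfl | hn
  · simp
  rw [natCast_mul_treeCoeff hn]
  exact norm_natCast_pow_self_div_factorial_le n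

theorem norm_treeCoeff_le (n : ℕ) : ‖treeCoeff n‖ ≤ Real.exp 1 ^ n := by
  rcases eq_or_ne n 0 with rfl | hn
  · simp [treeCoeff]
  refine le_trans ?_ (norm_natCast_mul_treeCoeff_le n)
  rw [norm_mul, Complex.norm_natCast]
  exact le_mul_of_one_le_left (norm_nonneg _) (by exact_mod_cast Nat.one_le_iff_ne_zero.mpr hn)

noncomputable def treeFun (z : ℂ) : ℂ := ∑' n, treeCoeff n * z ^ n

section TreeFun

variable {z : ℂ}

theorem exp_one_mul_norm_lt_one (hz : ‖z‖ < (Real.exp 1)⁻¹) : Real.exp 1 * ‖z‖ < 1 := by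
  rwa [← lt_div_iff₀' (Real.exp_pos 1), one_div]

theorem hasDerivAt_treeFun (hz : ‖z‖ < (Real.exp 1)⁻¹) :
    HasDerivAt treeFun (∑' n, n * treeCoeff n * z ^ (n - 1)) z :=
  hasDerivAt_tsum_mul_pow norm_treeCoeff_le (exp_one_mul_norm_lt_one hz)

theorem treeFun_zero : treeFun 0 = 0 := by
  rw [treeFun, tsum_eq_single 0 fun n hn => by simp [hn]]
  simp [treeCoeff]

theorem deriv_treeFun_zero : deriv treeFun 0 = 1 := by
  rw [(hasDerivAt_treeFun (by simpa using Real.exp_pos 1)).deriv,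
    tsum_eq_single 1 fun n hn => ?_]
  · simp [treeCoeff]
  · rcases n with _ | _ | n <;> simp_all

theorem mul_deriv_treeFun (hz : ‖z‖ < (Real.exp 1)⁻¹) :
    z * deriv treeFun z = ∑' k : ℕ, ((k + 1 : ℂ)) ^ (k + 1) / ((k + 1)! : ℂ) * z ^ (k + 1) := by
  have hsum : Summable fun n : ℕ => n * treeCoeff n * z ^ n :=
    (summable_norm_mul_pow_of_norm_le norm_natCast_mul_treeCoeff_le
      (exp_one_mul_norm_lt_one hz)).of_norm
  rw [(hasDerivAt_treeFun hz).deriv, ← tsum_mul_left]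
  calc ∑' n : ℕ, z * (n * treeCoeff n * z ^ (n - 1)) = ∑' n : ℕ, n * treeCoeff n * z ^ n :=
        tsum_congr fun n => by rcases n with _ | n <;> simp [pow_succ]; ring
    _ = _ := by
      rw [hsum.tsum_eq_zero_add]
      simp only [CharP.cast_eq_zero, zero_mul, zero_add]
      refine tsum_congr fun k => ?_
      rw [natCast_mul_treeCoeff (Nat.add_one_ne_zero k)]
      push_cast
      ring

theorem treeFun_mul_one_add_mul_deriv (hz : ‖z‖ < (Real.exp 1)⁻¹) :
    treeFun z * (1 + z * deriv treeFun z) = z * deriv treeFun z := by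
  have hb := summable_norm_mul_pow_of_norm_le norm_treeCoeff_le (exp_one_mul_norm_lt_one hz)
  have hc := summable_norm_mul_pow_of_norm_le norm_natCast_pow_self_div_factorial_le
    (exp_one_mul_norm_lt_one hz)
  have hone_add : 1 + z * deriv treeFun z = ∑' n : ℕ, (n : ℂ) ^ n / n ! * z ^ n := by
    rw [mul_deriv_treeFun hz, hc.of_norm.tsum_eq_zero_add]
    push_cast
    simp
  rw [hone_add, treeFun, tsum_mul_tsum_eq_tsum_sum_antidiagonal_of_summable_norm hb hc,
    (summable_norm_sum_mul_antidiagonal_of_summable_norm hb hc).of_norm.tsum_eq_zero_add,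
    mul_deriv_treeFun hz]
  simp only [Nat.antidiagonal_zero, sum_singleton, treeCoeff_zero, zero_mul, zero_add]
  refine tsum_congr fun k => ?_
  calc ∑ p ∈ antidiagonal (k + 1), treeCoeff p.1 * z ^ p.1 * ((p.2 : ℂ) ^ p.2 / p.2 ! * z ^ p.2)
      = (∑ p ∈ antidiagonal (k + 1), treeCoeff p.1 * ((p.2 : ℂ) ^ p.2 / p.2 !)) * z ^ (k + 1) := by
        rw [sum_mul]
        refine sum_congr rfl fun p hp => ?_
        rw [← HasAntidiagonal.mem_antidiagonal.mp hp, pow_add]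
        ring
    _ = _ := by rw [sum_antidiagonal_treeCoeff_mul]; push_cast; ring

theorem treeFun_mul_exp_neg (hz : ‖z‖ < (Real.exp 1)⁻¹) :
    treeFun z * Complex.exp (-treeFun z) = z := by
  have hT : ∀ w ∈ ball (0 : ℂ) (Real.exp 1)⁻¹, HasDerivAt treeFun (deriv treeFun w) w :=
    fun w hw => (hasDerivAt_treeFun (mem_ball_zero_iff.mp hw)).differentiableAt.hasDerivAt
  have hF : ∀ w ∈ ball (0 : ℂ) (Real.exp 1)⁻¹,
      HasDerivAt (fun w => treeFun w * Complex.exp (-treeFun w))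
        (deriv treeFun w * (1 - treeFun w) * Complex.exp (-treeFun w)) w := fun w hw =>
    ((hT w hw).mul (hT w hw).fun_neg.cexp).congr_deriv (by ring)
  have := eq_smul_deriv_zero_of_smul_deriv_eq isOpen_ball (convex_ball 0 _).isPreconnected
    (mem_ball_self (by positivity)) (fun w hw => (hF w hw).differentiableAt.differentiableWithinAt)
    (fun w hw => ?_) z (mem_ball_zero_iff.mpr hz)
  · rw [this, (hF 0 (mem_ball_self (by positivity))).deriv, deriv_treeFun_zero, treeFun_zero]
    simp
  · rw [(hF w hw).deriv, smul_eq_mul]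
    linear_combination -Complex.exp (-treeFun w) *
      treeFun_mul_one_add_mul_deriv (mem_ball_zero_iff.mp hw)

end TreeFun

/-- For `|x| < 1/e`, let `t = t(x) = 1 + Σ_{k≥1} (k^k/k!) x^k` (with `Re(t) > 1`).
Then `w(t) := -1/t - log(1 - 1/t)` satisfies `e^{-(w+1)} = x`; equivalently
`w(t) = Σ_{m≥2} t^{-m}/m` and `e^{-(w+1)} = (1 - 1/t)e^{-(1 - 1/t)}`. -/
theorem laplace_variable_on_lambert_curve (x t w : ℂ)
    (hx : ‖x‖ < (Real.exp 1)⁻¹)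
    (htdef : t = 1 + ∑' k : ℕ, ((k + 1 : ℂ)) ^ (k + 1) / ((k + 1)! : ℂ) * x ^ (k + 1))
    (ht : 1 < t.re)
    (hwdef : w = -1 / t - Complex.log (1 - 1 / t)) :
    Complex.exp (-(w + 1)) = x ∧
    w = ∑' m : ℕ, ((m : ℂ) + 2)⁻¹ * t ^ (-((m : ℤ) + 2)) ∧
    Complex.exp (-(w + 1)) = (1 - 1 / t) * Complex.exp (-(1 - 1 / t)) := by
  have hnorm : 1 < ‖t‖ := ht.trans_le (Complex.re_le_norm t)
  have ht0 : t ≠ 0 := norm_pos_iff.mp (one_pos.trans hnorm)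
  have htree : 1 - 1 / t = treeFun x := by
    rw [htdef, ← mul_deriv_treeFun hx] at ht0 ⊢
    field_simp
    linear_combination -treeFun_mul_one_add_mul_deriv hx
  have hlog : 1 - 1 / t ≠ 0 := by
    intro h
    rw [sub_eq_zero, eq_comm, div_eq_one_iff_eq ht0] at h
    simp [← h] at ht
  have hexp : Complex.exp (-(w + 1)) = (1 - 1 / t) * Complex.exp (-(1 - 1 / t)) := by
    rw [hwdef, show -(-1 / t - Complex.log (1 - 1 / t) + 1) =
      Complex.log (1 - 1 / t) + -(1 - 1 / t) by ring, Complex.exp_add, Complex.exp_log hlog]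
  refine ⟨by rw [hexp, htree, treeFun_mul_exp_neg hx], ?_, hexp⟩
  have hinv : ‖1 / t‖ < 1 := by rwa [norm_div, norm_one, div_lt_one (one_pos.trans hnorm)]
  rw [show w = -Complex.log (1 - 1 / t) - 1 / t by rw [hwdef]; ring,
    ← (hasSum_pow_add_two_div hinv).tsum_eq]
  refine tsum_congr fun m => ?_
  rw [show -((m : ℤ) + 2) = -((m + 2 : ℕ) : ℤ) by push_cast; ring, zpow_neg, zpow_natCast,
    one_div, inv_pow, div_eq_inv_mul]
  push_cast
  ring
end

section
/- Let w(t) = -1/t - log(1 - 1/t) = Σ_{m≥2} t^{-m}/m as a formal power series in 1/t. Then the functional equation w(s) = w(t) has exactly one formal solution s(t) ≠ t in descending powers of t, and it begins s(t) = -t + 2/3 + (4/135) t^{-2} + (8/405) t^{-3} + O(t^{-4}); moreover s is an involution: s(s(t)) = t. -/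
/-!
In `u = 1/t` the equation reads `w(B) = w(u)` with `w(u) = Σ_{m≥2} u^m/m`. For `B = b₁u + b₂u² + ⋯`
the coefficient of `u²` in `w(B)` is `b₁²/2`, so `b₁ = ±1`; and for `n ≥ 2` the coefficient of
`u^(n+1)` is `b₁bₙ` plus a polynomial in `b₁, …, bₙ₋₁`, because only `B²/2` reaches degree `n+1`
through `bₙ`. Hence a solution is determined by `b₁`: `b₁ = 1` gives `B = u`, and `b₁ = -1` gives
the unique other solution, built coefficient by coefficient. Since `w ∘ B = w`, also
`w ∘ (B ∘ B) = w`, and `B ∘ B` has linear coefficient `b₁² = 1`, so `B ∘ B = u`.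
-/

open PowerSeries

/-- For a formal power series `B` with zero constant term, `wSeries B` is the formal
composition `w(B) = Σ_{m≥2} B^m / m`, i.e. the result of substituting `B` for `u = 1/t`
in `w(t) = -1/t - log(1 - 1/t) = Σ_{m≥2} u^m/m`.  (Only `m ≤ n` contribute to the
`n`-th coefficient since `B` has positive order.) -/
noncomputable def wSeries (B : PowerSeries ℚ) : PowerSeries ℚ :=
  PowerSeries.mk fun n => ∑ m ∈ Finset.Icc 2 n, (m : ℚ)⁻¹ * coeff n (B ^ m)

/-- Formal composition `A ∘ B` of power series (meaningful when `B` has zero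
constant term). -/
noncomputable def psComp (A B : PowerSeries ℚ) : PowerSeries ℚ :=
  PowerSeries.mk fun n => ∑ m ∈ Finset.range (n + 1), coeff m A * coeff n (B ^ m)

namespace PowerSeries

variable {R : Type*}

section CommSemiring

variable [CommSemiring R]

theorem coeff_pow_of_lt {P : R⟦X⟧} (hP : constantCoeff P = 0) {m n : ℕ} (h : n < m) :
    coeff n (P ^ m) = 0 := by
  obtain ⟨P', rfl⟩ := X_dvd_iff.mpr hP
  rw [mul_pow, coeff_X_pow_mul', if_neg (by omega)]

end CommSemiring

section CommRing

variable [CommRing R]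

theorem eq_of_forall_X_pow_dvd_sub {P Q : R⟦X⟧} (h : ∀ n, X ^ n ∣ P - Q) : P = Q := by
  ext n
  exact sub_eq_zero.mp (by simpa using X_pow_dvd_iff.mp (h (n + 1)) n n.lt_succ_self)

theorem coeff_subst_eq_sum {B : R⟦X⟧} (hB : constantCoeff B = 0) (A : R⟦X⟧) (n : ℕ) :
    coeff n (subst B A) = ∑ m ∈ Finset.range (n + 1), coeff m A * coeff n (B ^ m) := by
  rw [coeff_subst' (HasSubst.of_constantCoeff_zero' hB)]
  refine finsum_eq_sum_of_support_subset _ fun m hm => ?_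
  by_contra hmn
  exact hm (by simp [coeff_pow_of_lt hB (m := m) (n := n) (by simpa using hmn)])

theorem coeff_one_subst {B : R⟦X⟧} (hB : constantCoeff B = 0) (A : R⟦X⟧) :
    coeff 1 (subst B A) = coeff 1 A * coeff 1 B := by
  simp [coeff_subst_eq_sum hB, Finset.sum_range_succ]

theorem X_pow_dvd_pow_succ_sub_pow_succ {P Q : R⟦X⟧} (hP : X ∣ P) (hQ : X ∣ Q) {n : ℕ}
    (h : X ^ n ∣ P - Q) (m : ℕ) : X ^ (n + m) ∣ P ^ (m + 1) - Q ^ (m + 1) := by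
  rw [← geom_sum₂_mul, pow_add, mul_comm _ (P - Q)]
  refine mul_dvd_mul h (Finset.dvd_sum fun i hi => ?_)
  rw [Nat.add_sub_cancel, ← pow_mul_pow_sub X (Finset.mem_range_succ_iff.mp hi)]
  exact mul_dvd_mul (pow_dvd_pow_of_dvd hP i) (pow_dvd_pow_of_dvd hQ _)

theorem coeff_succ_sq_sub_sq {P Q : R⟦X⟧} (hP : X ∣ P) (hQ : X ∣ Q) {n : ℕ} (hn : 2 ≤ n)
    (h : X ^ n ∣ P - Q) : coeff (n + 1) (P ^ 2 - Q ^ 2) = 2 * coeff 1 P * coeff n (P - Q) := by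
  obtain ⟨E, hE⟩ := h
  obtain ⟨P, rfl⟩ := hP
  obtain ⟨Q, rfl⟩ := hQ
  have hPQ : constantCoeff Q = constantCoeff P := by
    have h1 := congrArg (coeff 1) hE
    rw [coeff_X_pow_mul', if_neg (by omega), map_sub, coeff_succ_X_mul, coeff_succ_X_mul,
      coeff_zero_eq_constantCoeff, sub_eq_zero] at h1
    exact h1.symm
  have hsq : (X * P) ^ 2 - (X * Q) ^ 2 = X ^ (n + 1) * (E * (P + Q)) := by
    rw [sq_sub_sq, hE]; ring
  rw [hsq, hE, coeff_X_pow_mul', if_pos le_rfl, coeff_X_pow_mul', if_pos le_rfl, Nat.sub_self,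
    Nat.sub_self, coeff_succ_X_mul, coeff_zero_eq_constantCoeff, map_mul, map_add, hPQ]
  ring

end CommRing

end PowerSeries

theorem coeff_wSeries_X (n : ℕ) : coeff n (wSeries X) = if 2 ≤ n then (n : ℚ)⁻¹ else 0 := by
  simp only [wSeries, coeff_mk, coeff_X_pow, mul_ite, mul_one, mul_zero]
  rw [Finset.sum_ite_eq]
  simp

theorem wSeries_eq_subst {P : ℚ⟦X⟧} (hP : constantCoeff P = 0) :
    wSeries P = subst P (wSeries X) := by
  ext n
  simp only [coeff_subst_eq_sum hP, coeff_wSeries_X, ite_mul, zero_mul, ← Finset.sum_filter]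
  rw [wSeries, coeff_mk]
  congr 1
  ext m
  simp only [Finset.mem_Icc, Finset.mem_filter, Finset.mem_range]
  omega

theorem psComp_eq_subst {B : ℚ⟦X⟧} (hB : constantCoeff B = 0) (A : ℚ⟦X⟧) :
    psComp A B = subst B A := by
  ext n
  rw [psComp, coeff_mk, coeff_subst_eq_sum hB]

theorem coeff_two_wSeries {P : ℚ⟦X⟧} (hP : constantCoeff P = 0) :
    coeff 2 (wSeries P) = coeff 1 P ^ 2 / 2 := by
  obtain ⟨P, rfl⟩ := X_dvd_iff.mpr hP
  rw [wSeries, coeff_mk, Finset.Icc_self, Finset.sum_singleton, mul_pow, coeff_X_pow_mul',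
    if_pos le_rfl, Nat.sub_self, coeff_zero_eq_constantCoeff, map_pow, coeff_succ_X_mul,
    coeff_zero_eq_constantCoeff]
  norm_num
  ring

theorem coeff_succ_wSeries_sub_wSeries {P Q : ℚ⟦X⟧} (hP : constantCoeff P = 0)
    (hQ : constantCoeff Q = 0) {n : ℕ} (hn : 2 ≤ n) (h : X ^ n ∣ P - Q) :
    coeff (n + 1) (wSeries P) - coeff (n + 1) (wSeries Q) = coeff 1 P * coeff n (P - Q) := by
  simp only [wSeries, coeff_mk, ← Finset.sum_sub_distrib, ← mul_sub, ← map_sub]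
  rw [Finset.sum_eq_single_of_mem 2 (by simp; omega)]
  · rw [coeff_succ_sq_sub_sq (X_dvd_iff.mpr hP) (X_dvd_iff.mpr hQ) hn h]
    ring
  · intro m hm hm2
    obtain ⟨k, rfl⟩ : ∃ k, m = k + 3 := ⟨m - 3, by simp only [Finset.mem_Icc] at hm; omega⟩
    obtain ⟨F, hF⟩ := X_pow_dvd_pow_succ_sub_pow_succ (X_dvd_iff.mpr hP) (X_dvd_iff.mpr hQ) h (k + 2)
    rw [hF, coeff_X_pow_mul', if_neg (by omega), mul_zero]

theorem X_pow_dvd_sub_of_X_pow_succ_dvd_wSeries_sub {P Q : ℚ⟦X⟧} (hP : constantCoeff P = 0)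
    (hQ : constantCoeff Q = 0) (h1 : coeff 1 P = coeff 1 Q) (h1ne : coeff 1 P ≠ 0) {n : ℕ}
    (hw : X ^ (n + 1) ∣ wSeries P - wSeries Q) : X ^ n ∣ P - Q := by
  induction n with
  | zero => simp
  | succ n ih =>
    have hn : X ^ n ∣ P - Q := ih ((pow_dvd_pow X (n + 1).le_succ).trans hw)
    refine X_pow_dvd_iff.mpr fun m hm => ?_
    rcases (Nat.lt_succ_iff.mp hm).lt_or_eq with hm | rfl
    · exact X_pow_dvd_iff.mp hn m hm
    rcases m with _ | _ | m
    · simp [hP, hQ]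
    · simp [h1]
    have hstep := coeff_succ_wSeries_sub_wSeries hP hQ (by omega) hn
    rw [← map_sub, X_pow_dvd_iff.mp hw _ (by omega)] at hstep
    exact (mul_eq_zero.mp hstep.symm).resolve_left h1ne

theorem eq_of_wSeries_eq {P Q : ℚ⟦X⟧} (hP : constantCoeff P = 0) (hQ : constantCoeff Q = 0)
    (h1 : coeff 1 P = coeff 1 Q) (h1ne : coeff 1 P ≠ 0) (hw : wSeries P = wSeries Q) : P = Q :=
  eq_of_forall_X_pow_dvd_sub fun _ =>
    X_pow_dvd_sub_of_X_pow_succ_dvd_wSeries_sub hP hQ h1 h1ne (by simp [hw])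

/-- By `coeff_succ_wSeries_sub_wSeries` with `b₁ = -1`, the coefficient of `X^(n+3)` in `wSeries`
of the solution is that of its truncation below degree `n + 2` minus `bₙ₊₂`; it must be `1/(n+3)`. -/
noncomputable def deckCoeff : ℕ → ℚ
  | 0 => 0
  | 1 => -1
  | n + 2 =>
    coeff (n + 3) (wSeries (mk fun k => if _ : k < n + 2 then deckCoeff k else 0)) - (n + 3 : ℚ)⁻¹

noncomputable def deckSeries : ℚ⟦X⟧ := mk deckCoeff

theorem constantCoeff_deckSeries : constantCoeff deckSeries = 0 := by
  simp [deckSeries, deckCoeff]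

theorem coeff_one_deckSeries : coeff 1 deckSeries = -1 := by
  simp [deckSeries, deckCoeff]

theorem coeff_add_two_deckSeries (n : ℕ) :
    coeff (n + 2) deckSeries =
      coeff (n + 3) (wSeries (trunc (n + 2) deckSeries)) - (n + 3 : ℚ)⁻¹ := by
  have htrunc : (trunc (n + 2) deckSeries : ℚ⟦X⟧) =
      mk fun k => if _ : k < n + 2 then deckCoeff k else 0 := by
    ext k
    simp [coeff_trunc, deckSeries]
  rw [htrunc, deckSeries, coeff_mk, deckCoeff]

theorem wSeries_deckSeries : wSeries deckSeries = wSeries X := by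
  ext n
  rcases n with _ | _ | _ | n
  · simp [wSeries]
  · simp [wSeries]
  · rw [coeff_two_wSeries constantCoeff_deckSeries, coeff_one_deckSeries, coeff_wSeries_X]
    norm_num
  have hstep := coeff_succ_wSeries_sub_wSeries (Q := trunc (n + 2) deckSeries)
    constantCoeff_deckSeries (by simp [coeff_trunc, constantCoeff_deckSeries]) (n := n + 2)
    (by omega) (X_pow_dvd_iff.mpr fun m hm => by simp [coeff_trunc, hm])
  rw [map_sub, Polynomial.coeff_coe, coeff_trunc, if_neg (by omega), sub_zero,
    coeff_one_deckSeries, coeff_add_two_deckSeries] at hstep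
  change coeff (n + 3) _ - _ = _ at hstep
  change coeff (n + 3) _ = _
  rw [coeff_wSeries_X, if_pos (by omega), show ((n + 3 : ℕ) : ℚ) = n + 3 by push_cast; ring]
  linarith

theorem deckSeries_ne_X : deckSeries ≠ X := fun h => by
  have h1 := congrArg (coeff 1) h
  rw [coeff_one_deckSeries, coeff_one_X] at h1
  norm_num at h1

theorem wSeries_eq_wSeries_X_iff {P : ℚ⟦X⟧} (hP : constantCoeff P = 0) :
    wSeries P = wSeries X ↔ P = X ∨ P = deckSeries := by
  refine ⟨fun hw => ?_, by rintro (rfl | rfl) <;> simp [wSeries_deckSeries]⟩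
  have hsq : coeff 1 P ^ 2 = 1 := by
    have h2 := coeff_two_wSeries hP
    rw [hw, coeff_two_wSeries constantCoeff_X, coeff_one_X] at h2
    linarith
  rcases sq_eq_one_iff.mp hsq with h1 | h1
  · exact .inl (eq_of_wSeries_eq hP constantCoeff_X (by simp [h1]) (by simp [h1]) hw)
  · exact .inr (eq_of_wSeries_eq hP constantCoeff_deckSeries (by simp [h1, coeff_one_deckSeries])
      (by simp [h1]) (hw.trans wSeries_deckSeries.symm))

theorem subst_deckSeries_deckSeries : subst deckSeries deckSeries = X := by
  have hB := constantCoeff_deckSeries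
  have hs := HasSubst.of_constantCoeff_zero' hB
  have hBB : constantCoeff (subst deckSeries deckSeries) = 0 := constantCoeff_subst_eq_zero hB _ hB
  have hw : wSeries (subst deckSeries deckSeries) = wSeries X :=
    calc wSeries (subst deckSeries deckSeries)
        = subst deckSeries (subst deckSeries (wSeries X)) := by
          rw [wSeries_eq_subst hBB, subst_comp_subst_apply hs hs]
      _ = wSeries X := by
          rw [← wSeries_eq_subst hB, wSeries_deckSeries, ← wSeries_eq_subst hB, wSeries_deckSeries]
  refine ((wSeries_eq_wSeries_X_iff hBB).mp hw).resolve_right fun h => ?_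
  have h1 := congrArg (coeff 1) h
  rw [coeff_one_subst hB, coeff_one_deckSeries] at h1
  norm_num at h1

theorem coeff_deckSeries_two_to_five :
    coeff 2 deckSeries = -2 / 3 ∧ coeff 3 deckSeries = -4 / 9 ∧
      coeff 4 deckSeries = -44 / 135 ∧ coeff 5 deckSeries = -104 / 405 := by
  have e (k : ℕ) (hk : 2 ≤ k) : coeff k (wSeries deckSeries) = (k : ℚ)⁻¹ := by
    rw [wSeries_deckSeries, coeff_wSeries_X, if_pos hk]
  have e3 := e 3 (by norm_num)
  have e4 := e 4 (by norm_num)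
  have e5 := e 5 (by norm_num)
  have e6 := e 6 (by norm_num)
  simp [wSeries, Finset.sum_Icc_succ_top, pow_succ, coeff_mul, Finset.Nat.antidiagonal_succ,
    constantCoeff_deckSeries, coeff_one_deckSeries] at e3 e4 e5 e6
  have h2 : coeff 2 deckSeries = -2 / 3 := by linarith
  rw [h2] at e4 e5 e6
  have h3 : coeff 3 deckSeries = -4 / 9 := by linarith
  rw [h3] at e5 e6
  have h4 : coeff 4 deckSeries = -44 / 135 := by linarith
  rw [h4] at e6
  exact ⟨h2, h3, h4, by linarith⟩

theorem exists_deckSeries_mul_eq_X :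
    ∃ A : ℚ⟦X⟧, deckSeries * A = X ∧ coeff 0 A = -1 ∧ coeff 1 A = 2 / 3 ∧ coeff 2 A = 0 ∧
      coeff 3 A = 4 / 135 ∧ coeff 4 A = 8 / 405 := by
  obtain ⟨U, hU⟩ := X_dvd_iff.mpr constantCoeff_deckSeries
  have hcoeff (k : ℕ) : coeff k U = coeff (k + 1) deckSeries := by rw [hU, coeff_succ_X_mul]
  obtain ⟨h2, h3, h4, h5⟩ := coeff_deckSeries_two_to_five
  have hU0 : constantCoeff U = -1 := by
    rw [← coeff_zero_eq_constantCoeff_apply, hcoeff, coeff_one_deckSeries]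
  have hUA : U * U⁻¹ = 1 := PowerSeries.mul_inv_cancel U (by simp [hU0])
  refine ⟨U⁻¹, by rw [hU, mul_assoc, hUA, mul_one], ?_⟩
  have a0 : coeff 0 U⁻¹ = -1 := by simp [hU0]
  have e1 := congrArg (coeff 1) hUA
  have e2 := congrArg (coeff 2) hUA
  have e3 := congrArg (coeff 3) hUA
  have e4 := congrArg (coeff 4) hUA
  simp only [coeff_mul, Finset.Nat.antidiagonal_succ] at e1 e2 e3 e4
  simp [hcoeff, coeff_one_deckSeries, h2, h3, h4, h5, a0] at e1 e2 e3 e4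
  have a1 : coeff 1 U⁻¹ = 2 / 3 := by linarith
  rw [a1] at e2 e3 e4
  have a2 : coeff 2 U⁻¹ = 0 := by linarith
  rw [a2] at e3 e4
  have a3 : coeff 3 U⁻¹ = 4 / 135 := by linarith
  rw [a3] at e4
  exact ⟨a0, a1, a2, a3, by linarith⟩

/-- A formal Laurent series `s(t)` in descending powers of `t` is encoded by the power series
`B(u) = 1/s(1/u)` in `u = 1/t`, which has zero constant term; writing `B = X·C` with `C` a unit,
`s(t) = A(u)/u` where `A = C⁻¹`, i.e. `B * A = X`; `s(s(t)) = t` becomes `B ∘ B = X`. -/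
theorem deck_transformation_of_lambert_curve :
    ∃ B : PowerSeries ℚ,
      (constantCoeff B = 0 ∧ B ≠ X ∧ wSeries B = wSeries X) ∧
      (∀ B' : PowerSeries ℚ,
        constantCoeff B' = 0 → B' ≠ X → wSeries B' = wSeries X → B' = B) ∧
      psComp B B = X ∧
      ∃ A : PowerSeries ℚ, B * A = X ∧
        coeff 0 A = -1 ∧ coeff 1 A = 2 / 3 ∧ coeff 2 A = 0 ∧
        coeff 3 A = 4 / 135 ∧ coeff 4 A = 8 / 405 := by
  refine ⟨deckSeries, ⟨constantCoeff_deckSeries, deckSeries_ne_X, wSeries_deckSeries⟩,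
    fun B' hB' hne hw => ((wSeries_eq_wSeries_X_iff hB').mp hw).resolve_left hne, ?_,
    exists_deckSeries_mul_eq_X⟩
  rw [psComp_eq_subst constantCoeff_deckSeries, subst_deckSeries_deckSeries]
end

section
/- Define polynomial 1-forms ξ_n(t) dt by ξ_0(t) = 1 and ξ_n(t) = d/dt [t²(t-1) ξ_{n-1}(t)]. Then ξ_n(t) = (2n+1)!! t^{2n} - ((2n+3)!!/3 - (2n+1)!!) t^{2n-1} + ... + (-1)^n (n+1)! t^n; in particular ξ_n is a polynomial of degree 2n divisible by t^n, with leading coefficient (2n+1)!! and lowest-order coefficient (-1)^n (n+1)!. -/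
/-!
Writing `X²(X - 1)p = X³p - X²p` and differentiating gives the coefficient recurrence
`[t^{k+1}] ξ_{n+1} = (k + 2)([t^k] Xξ_n - [t^k] ξ_n)`. The top coefficient only sees the
leading term of `ξ_n` and gets multiplied by `2n + 3`; the bottom one only sees the lowest
term and gets multiplied by `-(n + 2)`, since differentiating `X^{n+2}(X - 1)q` loses exactly
one power of `X`. The coefficient just below the top then follows from the recurrence and the
top coefficient.
-/

open Polynomial

/-- The polynomials `ξ_n(t)` defined by `ξ_0(t) = 1` and
`ξ_n(t) = d/dt [t²(t-1) ξ_{n-1}(t)]`. -/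
noncomputable def xi : ℕ → Polynomial ℚ
  | 0 => 1
  | n + 1 => derivative (X ^ 2 * (X - 1) * xi n)

theorem Polynomial.coeff_derivative_X_sq_mul_X_sub_one_mul {R : Type*} [CommRing R]
    (p : R[X]) (k : ℕ) :
    (derivative (X ^ 2 * (X - 1) * p)).coeff (k + 1) =
      ((k : R) + 2) * ((X * p).coeff k - p.coeff k) := by
  have hcoeff : (X ^ 2 * (X - 1) * p).coeff (k + 2) = (X * p).coeff k - p.coeff k := by
    rw [show X ^ 2 * (X - 1) * p = X ^ 2 * (X * p - p) by ring, coeff_X_pow_mul, coeff_sub]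
  rw [coeff_derivative, hcoeff]
  push_cast
  ring

theorem coeff_xi_succ (n k : ℕ) :
    (xi (n + 1)).coeff (k + 1) = ((k : ℚ) + 2) * ((X * xi n).coeff k - (xi n).coeff k) :=
  coeff_derivative_X_sq_mul_X_sub_one_mul (xi n) k

theorem natDegree_xi_le (n : ℕ) : (xi n).natDegree ≤ 2 * n := by
  induction n with
  | zero => simp [xi]
  | succ n ih =>
    have hcubic : ((X : ℚ[X]) ^ 2 * (X - 1)).natDegree ≤ 3 := by compute_degree
    have hprod : ((X : ℚ[X]) ^ 2 * (X - 1) * xi n).natDegree ≤ 3 + 2 * n :=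
      natDegree_mul_le.trans (by omega)
    have := natDegree_derivative_le ((X : ℚ[X]) ^ 2 * (X - 1) * xi n)
    simp only [xi]
    omega

theorem coeff_xi_two_mul (n : ℕ) : (xi n).coeff (2 * n) = ((2 * n + 1).doubleFactorial : ℚ) := by
  induction n with
  | zero => simp [xi]
  | succ n ih =>
    have hvanish : (xi n).coeff (2 * n + 1) = 0 :=
      coeff_eq_zero_of_natDegree_lt (by have := natDegree_xi_le n; omega)
    rw [show 2 * (n + 1) = 2 * n + 1 + 1 by ring, coeff_xi_succ, coeff_X_mul, ih, hvanish,
      show 2 * n + 1 + 1 + 1 = 2 * n + 1 + 2 by ring, Nat.doubleFactorial_add_two]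
    push_cast
    ring

theorem natDegree_xi (n : ℕ) : (xi n).natDegree = 2 * n := by
  refine (natDegree_xi_le n).antisymm (le_natDegree_of_ne_zero ?_)
  rw [coeff_xi_two_mul]
  exact_mod_cast (Nat.doubleFactorial_pos _).ne'

theorem X_pow_dvd_xi (n : ℕ) : (X : ℚ[X]) ^ n ∣ xi n := by
  induction n with
  | zero => simp
  | succ n ih =>
    have h : (X : ℚ[X]) ^ (n + 1 + 1) ∣ X ^ 2 * (X - 1) * xi n := by
      rw [add_assoc, pow_add, mul_comm (X ^ n)]
      exact mul_dvd_mul (dvd_mul_right _ _) ih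
    have hderiv := pow_sub_one_dvd_derivative_of_pow_dvd h
    rwa [Nat.add_sub_cancel] at hderiv

theorem coeff_xi_self (n : ℕ) : (xi n).coeff n = (-1 : ℚ) ^ n * ((n + 1).factorial : ℚ) := by
  induction n with
  | zero => simp [xi]
  | succ n ih =>
    have hdvd : (X : ℚ[X]) ^ (n + 1) ∣ X * xi n :=
      pow_succ' (X : ℚ[X]) n ▸ mul_dvd_mul_left X (X_pow_dvd_xi n)
    have hvanish : (X * xi n).coeff n = 0 := X_pow_dvd_iff.mp hdvd n n.lt_succ_self
    rw [coeff_xi_succ, hvanish, ih, Nat.factorial_succ (n + 1)]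
    push_cast
    ring

-- `[t^{2n}] Xξ_n = [t^{2n-1}] ξ_n` for `n ≥ 1`; unlike the latter it also fits the formula at `n = 0`.
theorem coeff_X_mul_xi_two_mul (n : ℕ) :
    (X * xi n).coeff (2 * n) =
      -(((2 * n + 3).doubleFactorial : ℚ) / 3 - ((2 * n + 1).doubleFactorial : ℚ)) := by
  induction n with
  | zero => simp [Nat.doubleFactorial]
  | succ n ih =>
    have h3 : (2 * n + 3).doubleFactorial = (2 * n + 3) * (2 * n + 1).doubleFactorial :=
      Nat.doubleFactorial_add_two (2 * n + 1)
    have h5 : (2 * n + 5).doubleFactorial = (2 * n + 5) * (2 * n + 3).doubleFactorial :=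
      Nat.doubleFactorial_add_two (2 * n + 3)
    rw [show 2 * (n + 1) = 2 * n + 1 + 1 by ring, coeff_X_mul, coeff_xi_succ, ih,
      coeff_xi_two_mul, show 2 * n + 1 + 1 + 3 = 2 * n + 5 by ring,
      show 2 * n + 1 + 1 + 1 = 2 * n + 3 by ring, h5, h3]
    push_cast
    ring

/-- `ξ_n(t) = (2n+1)!! t^{2n} - ((2n+3)!!/3 - (2n+1)!!) t^{2n-1} + ⋯ + (-1)^n (n+1)! t^n`:
`ξ_n` is a polynomial of degree `2n` divisible by `t^n`, with leading coefficient
`(2n+1)!!`, next coefficient `-((2n+3)!!/3 - (2n+1)!!)` (for `n ≥ 1`), and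
lowest-order coefficient `(-1)^n (n+1)!`. -/
theorem xi_coefficients (n : ℕ) :
    (xi n).natDegree = 2 * n ∧
    (X : Polynomial ℚ) ^ n ∣ xi n ∧
    (xi n).coeff (2 * n) = (Nat.doubleFactorial (2 * n + 1) : ℚ) ∧
    (xi n).coeff n = (-1 : ℚ) ^ n * (Nat.factorial (n + 1) : ℚ) ∧
    (1 ≤ n → (xi n).coeff (2 * n - 1) =
      -((Nat.doubleFactorial (2 * n + 3) : ℚ) / 3 - (Nat.doubleFactorial (2 * n + 1) : ℚ))) := by
  refine ⟨natDegree_xi n, X_pow_dvd_xi n, coeff_xi_two_mul n, coeff_xi_self n, fun hn => ?_⟩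
  rw [← coeff_X_mul_xi_two_mul, ← coeff_X_mul, Nat.sub_add_cancel (by omega : 1 ≤ 2 * n)]
end
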